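/- arXiv:1808.01440 — 4 statements merged into one kernel-verified Lean document; each statement's English description precedes it below -/
import Mathlib

section
/- Let H be a separable Hilbert space and L₁, L₂ bounded operators on H. Then the range of L₁ is contained in the range of L₂ if and only if there exists λ ≥ 0 such that L₁L₁* ≤ λ²L₂L₂* (as positive operators), if and only if there exists a bounded operator X on H with L₁ = L₂X. -/
/-!
(1 → 3) Restricted to `(ker L₂)ᗮ`, `L₂` is injective with the same range, so `L₁ = L₂ X` for a
linear `X`, which is continuous by the closed graph theorem.
(3 → 2) `‖(L₂ X)† f‖ ≤ ‖X‖ ‖L₂† f‖`.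
(2 → 1) Positivity says `‖L₁† f‖ ≤ l ‖L₂† f‖`. For `x = L₁ u` the functional `⟪x, ·⟫` is then
bounded by a multiple of `‖L₂† ·‖`, so it factors through `L₂†` as a bounded functional on the
range of `L₂†`; the Riesz representative `w` of a Hahn–Banach extension satisfies `L₂ w = x`.
-/

open scoped InnerProductSpace
open ContinuousLinearMap (adjoint)

noncomputable def proj {H : Type*} [NormedAddCommGroup H] [InnerProductSpace ℂ H]
    (U : Submodule ℂ H) [U.HasOrthogonalProjection] : H →L[ℂ] H :=
  U.subtypeL.comp U.orthogonalProjectionOnto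

variable {H : Type*} [NormedAddCommGroup H] [InnerProductSpace ℂ H] [CompleteSpace H]
  [TopologicalSpace.SeparableSpace H]

namespace ContinuousLinearMap

section Banach

variable {𝕜 E F G : Type*} [NontriviallyNormedField 𝕜]
  [NormedAddCommGroup E] [NormedSpace 𝕜 E] [CompleteSpace E]
  [NormedAddCommGroup F] [NormedSpace 𝕜 F]
  [NormedAddCommGroup G] [NormedSpace 𝕜 G] [CompleteSpace G]

theorem exists_eq_comp_of_range_le_of_injective (A : E →L[𝕜] F) {B : G →L[𝕜] F}
    (hB : Function.Injective B)
    (h : LinearMap.range (A : E →ₗ[𝕜] F) ≤ LinearMap.range (B : G →ₗ[𝕜] F)) :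
    ∃ X : E →L[𝕜] G, A = B ∘L X := by
  obtain ⟨C, hC⟩ := LinearMap.exists_leftInverse_of_injective (B : G →ₗ[𝕜] F)
    (LinearMap.ker_eq_bot.2 hB)
  have hBC (x : E) : B (C (A x)) = A x := by
    obtain ⟨g, hg⟩ := h ⟨x, rfl⟩
    have hCB : C (B g) = g := LinearMap.congr_fun hC g
    rw [coe_coe, coe_coe] at hg
    rw [← hg, hCB]
  -- closed graph: a limit `y` of `C (A uₙ)` is identified with `C (A x)` after applying `B`
  have hcont : Continuous (C ∘ₗ (A : E →ₗ[𝕜] F)) := by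
    refine LinearMap.continuous_of_seq_closed_graph (g := C ∘ₗ (A : E →ₗ[𝕜] F))
      fun u x y hu hCAu ↦ hB ?_
    refine tendsto_nhds_unique ((B.continuous.tendsto y).comp hCAu) ?_
    simpa only [Function.comp_def, LinearMap.comp_apply, coe_coe, hBC]
      using (A.continuous.tendsto x).comp hu
  exact ⟨⟨_, hcont⟩, ext fun x ↦ (hBC x).symm⟩

end Banach

theorem exists_eq_comp_of_range_le {𝕜 E F G : Type*} [RCLike 𝕜]
    [NormedAddCommGroup E] [NormedSpace 𝕜 E] [CompleteSpace E]
    [NormedAddCommGroup F] [NormedSpace 𝕜 F]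
    [NormedAddCommGroup G] [InnerProductSpace 𝕜 G] [CompleteSpace G]
    (A : E →L[𝕜] F) (B : G →L[𝕜] F)
    (h : LinearMap.range (A : E →ₗ[𝕜] F) ≤ LinearMap.range (B : G →ₗ[𝕜] F)) :
    ∃ X : E →L[𝕜] G, A = B ∘L X := by
  set K := LinearMap.ker (B : G →ₗ[𝕜] F)
  have hinj : Function.Injective (B ∘L Kᗮ.subtypeL) := by
    refine (injective_iff_map_eq_zero _).2 fun u hu ↦ ?_
    exact Subtype.ext ((Submodule.orthogonal_disjoint K).le_bot ⟨hu, u.2⟩)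
  have hrange : LinearMap.range (B : G →ₗ[𝕜] F) ≤
      LinearMap.range ((B ∘L Kᗮ.subtypeL : Kᗮ →L[𝕜] F) : Kᗮ →ₗ[𝕜] F) := by
    rintro _ ⟨g, rfl⟩
    refine ⟨⟨g - K.starProjection g, K.sub_starProjection_mem_orthogonal g⟩, ?_⟩
    simp [show B (K.starProjection g) = 0 from K.starProjection_apply_mem g]
  obtain ⟨X, rfl⟩ := exists_eq_comp_of_range_le_of_injective A hinj (h.trans hrange)
  exact ⟨Kᗮ.subtypeL ∘L X, rfl⟩

section Hilbert

variable {𝕜 E F G : Type*} [RCLike 𝕜]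
  [NormedAddCommGroup E] [InnerProductSpace 𝕜 E] [CompleteSpace E]
  [NormedAddCommGroup F] [InnerProductSpace 𝕜 F] [CompleteSpace F]
  [NormedAddCommGroup G] [InnerProductSpace 𝕜 G] [CompleteSpace G]

theorem re_inner_comp_adjoint_apply_self (A : E →L[𝕜] F) (f : F) :
    RCLike.re ⟪(A ∘L adjoint A) f, f⟫_𝕜 = ‖adjoint A f‖ ^ 2 := by
  simpa using (apply_norm_sq_eq_inner_adjoint_left (adjoint A) f).symm

theorem isPositive_sq_smul_comp_adjoint_sub_iff {l : ℝ} (hl : 0 ≤ l) (A : E →L[𝕜] F)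
    (B : G →L[𝕜] F) :
    (((l ^ 2 : ℝ) : 𝕜) • (B ∘L adjoint B) - A ∘L adjoint A).IsPositive ↔
      ∀ f, ‖adjoint A f‖ ≤ l * ‖adjoint B f‖ := by
  have hsa : IsSelfAdjoint (((l ^ 2 : ℝ) : 𝕜) • (B ∘L adjoint B) - A ∘L adjoint A) :=
    (IsSelfAdjoint.smul (RCLike.conj_ofReal _) (isPositive_self_comp_adjoint B).isSelfAdjoint).sub
      (isPositive_self_comp_adjoint A).isSelfAdjoint
  have hre (f : F) : reApplyInnerSelf (((l ^ 2 : ℝ) : 𝕜) • (B ∘L adjoint B) - A ∘L adjoint A) f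
      = (l * ‖adjoint B f‖) ^ 2 - ‖adjoint A f‖ ^ 2 := by
    rw [reApplyInnerSelf, sub_apply, smul_apply, inner_sub_left, inner_smul_left, map_sub,
      RCLike.conj_ofReal, RCLike.re_ofReal_mul, re_inner_comp_adjoint_apply_self,
      re_inner_comp_adjoint_apply_self, mul_pow]
  simp only [IsPositive, hsa.isSymmetric, true_and, hre, sub_nonneg]
  exact forall_congr' fun f ↦ pow_le_pow_iff_left₀ (norm_nonneg _) (by positivity) two_ne_zero

theorem mem_range_of_forall_norm_inner_le (L : E →L[𝕜] F) {x : F} {c : ℝ}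
    (hx : ∀ y, ‖⟪x, y⟫_𝕜‖ ≤ c * ‖adjoint L y‖) : x ∈ LinearMap.range (L : E →ₗ[𝕜] F) := by
  set T : F →ₗ[𝕜] E := (adjoint L).toLinearMap
  have hker : LinearMap.ker T ≤ LinearMap.ker (innerₛₗ 𝕜 x) := fun y hy ↦ by
    simpa [show adjoint L y = 0 from hy] using hx y
  let φ : LinearMap.range T →ₗ[𝕜] 𝕜 :=
    (LinearMap.ker T).liftQ _ hker ∘ₗ T.quotKerEquivRange.symm
  have hφ (y : F) : φ ⟨T y, T.mem_range_self y⟩ = ⟪x, y⟫_𝕜 := by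
    simp only [φ, LinearMap.comp_apply, LinearEquiv.coe_coe]
    rw [LinearMap.quotKerEquivRange_symm_apply_image T y, Submodule.mkQ_apply,
      Submodule.liftQ_apply, innerₛₗ_apply_apply]
  have hφ_le : ∀ s, ‖φ s‖ ≤ c * ‖s‖ := by
    rintro ⟨_, y, rfl⟩
    exact (hφ y).symm ▸ hx y
  obtain ⟨g, hg, -⟩ := exists_extension_norm_eq _ (φ.mkContinuous c hφ_le)
  refine ⟨(InnerProductSpace.toDual 𝕜 E).symm g, ext_inner_right 𝕜 fun y ↦ ?_⟩
  rw [coe_coe, ← adjoint_inner_right, InnerProductSpace.toDual_symm_apply, ← hφ]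
  exact hg ⟨T y, T.mem_range_self y⟩

theorem range_le_range_of_forall_norm_adjoint_le (A : E →L[𝕜] F) (B : G →L[𝕜] F) {l : ℝ}
    (h : ∀ f, ‖adjoint A f‖ ≤ l * ‖adjoint B f‖) :
    LinearMap.range (A : E →ₗ[𝕜] F) ≤ LinearMap.range (B : G →ₗ[𝕜] F) := by
  rintro _ ⟨u, rfl⟩
  refine mem_range_of_forall_norm_inner_le B (c := ‖u‖ * l) fun y ↦ ?_
  calc ‖⟪A u, y⟫_𝕜‖ = ‖⟪u, adjoint A y⟫_𝕜‖ := by rw [adjoint_inner_right]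
    _ ≤ ‖u‖ * ‖adjoint A y‖ := norm_inner_le_norm _ _
    _ ≤ ‖u‖ * (l * ‖adjoint B y‖) := by gcongr; exact h y
    _ = ‖u‖ * l * ‖adjoint B y‖ := (mul_assoc ..).symm

theorem norm_adjoint_comp_apply_le (B : G →L[𝕜] F) (X : E →L[𝕜] G) (f : F) :
    ‖adjoint (B ∘L X) f‖ ≤ ‖X‖ * ‖adjoint B f‖ :=
  calc ‖adjoint (B ∘L X) f‖ = ‖adjoint X (adjoint B f)‖ := by rw [adjoint_comp, comp_apply]
    _ ≤ ‖adjoint X‖ * ‖adjoint B f‖ := le_opNorm _ _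
    _ = ‖X‖ * ‖adjoint B f‖ := by rw [LinearIsometryEquiv.norm_map]

end Hilbert

end ContinuousLinearMap

theorem douglas_factorization (L₁ L₂ : H →L[ℂ] H) :
    List.TFAE
      [LinearMap.range (L₁ : H →ₗ[ℂ] H) ≤ LinearMap.range (L₂ : H →ₗ[ℂ] H),
       ∃ l : ℝ, 0 ≤ l ∧
         (l ^ 2 • (L₂ ∘L adjoint L₂) - L₁ ∘L adjoint L₁).IsPositive,
       ∃ X : H →L[ℂ] H, L₁ = L₂ ∘L X] := by
  have hpos_iff {l : ℝ} (hl : 0 ≤ l) :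
      (l ^ 2 • (L₂ ∘L adjoint L₂) - L₁ ∘L adjoint L₁).IsPositive ↔
        ∀ f, ‖adjoint L₁ f‖ ≤ l * ‖adjoint L₂ f‖ := by
    rw [RCLike.real_smul_eq_coe_smul (K := ℂ)]
    exact ContinuousLinearMap.isPositive_sq_smul_comp_adjoint_sub_iff hl L₁ L₂
  tfae_have 1 → 3 := ContinuousLinearMap.exists_eq_comp_of_range_le L₁ L₂
  tfae_have 3 → 2 := by
    rintro ⟨X, rfl⟩
    exact ⟨‖X‖, norm_nonneg X,
      (hpos_iff (norm_nonneg X)).2 (ContinuousLinearMap.norm_adjoint_comp_apply_le L₂ X)⟩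
  tfae_have 2 → 1 := fun ⟨l, hl, hpos⟩ ↦
    ContinuousLinearMap.range_le_range_of_forall_norm_adjoint_le L₁ L₂ ((hpos_iff hl).1 hpos)
  tfae_finish
end

section
/- Let {f_i}_{i∈I} be a K-frame for a Hilbert space H with bounds A, B, where K ∈ B(H) has closed range. Then the frame operator S_F, defined by S_F f = Σ_{i∈I} ⟨f, f_i⟩ f_i, restricted to R(K), is an injective map onto S_F(R(K)), and its inverse S_F^{-1}: S_F(R(K)) → R(K) satisfies B^{-1}‖f‖ ≤ ‖S_F^{-1} f‖ ≤ A^{-1}‖K†‖²‖f‖ for all f ∈ S_F(R(K)), where K† is the pseudo-inverse of K. -/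
/-!
On `R(K)` the frame operator is bounded below: for `f = K h` the Moore–Penrose identities give
`f = (K†)* K* f`, so `‖f‖ ≤ ‖K†‖ ‖K* f‖`, and the lower frame bound turns this into
`A ‖f‖² ≤ ‖K†‖² ⟪f, S f⟫ ≤ ‖K†‖² ‖f‖ ‖S f‖`. This gives injectivity on `R(K)` and the upper bound
for `S⁻¹`. The lower bound for `S⁻¹` is `‖S‖ ≤ B`, which follows from the Cauchy–Schwarz
inequality in `ℓ²` applied to `⟪g, S f⟫ = ∑ ⟪f_i, f⟫ ⟪g, f_i⟫`.
-/

open scoped InnerProductSpace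
open ContinuousLinearMap (adjoint)

variable {H : Type*} [NormedAddCommGroup H] [InnerProductSpace ℂ H] [CompleteSpace H]
  [TopologicalSpace.SeparableSpace H]

theorem Real.summable_and_tsum_mul_le_sqrt_mul_sqrt {ι : Type*} {a b : ι → ℝ}
    (ha₀ : ∀ i, 0 ≤ a i) (hb₀ : ∀ i, 0 ≤ b i)
    (ha : Summable fun i => a i ^ 2) (hb : Summable fun i => b i ^ 2) :
    (Summable fun i => a i * b i) ∧
      ∑' i, a i * b i ≤ √(∑' i, a i ^ 2) * √(∑' i, b i ^ 2) := by
  simpa [Real.sqrt_eq_rpow] using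
    Real.summable_and_inner_le_Lp_mul_Lq_tsum_of_nonneg Real.HolderConjugate.two_two ha₀ hb₀
      (by simpa using ha) (by simpa using hb)

section FrameOperator

variable {𝕜 E ι : Type*} [RCLike 𝕜] [NormedAddCommGroup E] [InnerProductSpace 𝕜 E]
  {F : ι → E} {f x : E}

theorem hasSum_inner_of_hasSum_frame (g : E) (hx : HasSum (fun i => ⟪F i, f⟫_𝕜 • F i) x) :
    HasSum (fun i => ⟪F i, f⟫_𝕜 * ⟪g, F i⟫_𝕜) ⟪g, x⟫_𝕜 := by
  simpa [inner_smul_right] using hx.mapL (innerSL 𝕜 g)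

theorem hasSum_norm_inner_sq_of_hasSum_frame (hx : HasSum (fun i => ⟪F i, f⟫_𝕜 • F i) x) :
    HasSum (fun i => ‖⟪F i, f⟫_𝕜‖ ^ 2) (RCLike.re ⟪f, x⟫_𝕜) := by
  have h := (hasSum_inner_of_hasSum_frame f hx).mapL RCLike.reCLM
  simp only [RCLike.reCLM_apply, ← inner_conj_symm f (F _), RCLike.mul_conj] at h
  exact_mod_cast h

theorem norm_inner_le_of_hasSum_frame {g : E} (hx : HasSum (fun i => ⟪F i, f⟫_𝕜 • F i) x)
    (hf : Summable fun i => ‖⟪F i, f⟫_𝕜‖ ^ 2) (hg : Summable fun i => ‖⟪F i, g⟫_𝕜‖ ^ 2) :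
    ‖⟪g, x⟫_𝕜‖ ≤ √(∑' i, ‖⟪F i, f⟫_𝕜‖ ^ 2) * √(∑' i, ‖⟪F i, g⟫_𝕜‖ ^ 2) := by
  obtain ⟨hsummable, hcs⟩ := Real.summable_and_tsum_mul_le_sqrt_mul_sqrt
    (fun i => norm_nonneg _) (fun i => norm_nonneg _) hf hg
  refine ((hasSum_inner_of_hasSum_frame g hx).norm_le_of_bounded hsummable.hasSum
    fun i => ?_).trans hcs
  rw [norm_mul, norm_inner_symm g]

theorem sqrt_tsum_le_of_bessel {B : ℝ} (hB : 0 ≤ B)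
    (hbessel : ∑' i, ‖⟪F i, f⟫_𝕜‖ ^ 2 ≤ B * ‖f‖ ^ 2) :
    √(∑' i, ‖⟪F i, f⟫_𝕜‖ ^ 2) ≤ √B * ‖f‖ := by
  calc √(∑' i, ‖⟪F i, f⟫_𝕜‖ ^ 2) ≤ √(B * ‖f‖ ^ 2) := Real.sqrt_le_sqrt hbessel
    _ = √B * ‖f‖ := by rw [Real.sqrt_mul hB, Real.sqrt_sq (norm_nonneg f)]

theorem norm_le_mul_norm_of_bessel {S : E → E} {B : ℝ} (hB : 0 ≤ B)
    (hS : ∀ f, HasSum (fun i => ⟪F i, f⟫_𝕜 • F i) (S f))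
    (hbessel : ∀ f, ∑' i, ‖⟪F i, f⟫_𝕜‖ ^ 2 ≤ B * ‖f‖ ^ 2) (f : E) :
    ‖S f‖ ≤ B * ‖f‖ := by
  have hsummable : ∀ g, Summable fun i => ‖⟪F i, g⟫_𝕜‖ ^ 2 :=
    fun g => (hasSum_norm_inner_sq_of_hasSum_frame (hS g)).summable
  have hsq : ‖S f‖ * ‖S f‖ ≤ B * ‖f‖ * ‖S f‖ :=
    calc ‖S f‖ * ‖S f‖ = ‖⟪S f, S f⟫_𝕜‖ := by
          rw [inner_self_eq_norm_sq_to_K, norm_pow, RCLike.norm_ofReal, abs_norm, sq]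
      _ ≤ √(∑' i, ‖⟪F i, f⟫_𝕜‖ ^ 2) * √(∑' i, ‖⟪F i, S f⟫_𝕜‖ ^ 2) :=
        norm_inner_le_of_hasSum_frame (hS f) (hsummable f) (hsummable (S f))
      _ ≤ (√B * ‖f‖) * (√B * ‖S f‖) := by
        gcongr
        exacts [sqrt_tsum_le_of_bessel hB (hbessel f), sqrt_tsum_le_of_bessel hB (hbessel (S f))]
      _ = B * ‖f‖ * ‖S f‖ := by rw [mul_mul_mul_comm, Real.mul_self_sqrt hB, mul_assoc]
  rcases (norm_nonneg (S f)).eq_or_lt with hzero | hpos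
  · rw [← hzero]; positivity
  · exact le_of_mul_le_mul_right hsq hpos

end FrameOperator

section PseudoInverse

variable {𝕜 E G : Type*} [RCLike 𝕜] [NormedAddCommGroup E] [InnerProductSpace 𝕜 E]
  [CompleteSpace E] [NormedAddCommGroup G] [InnerProductSpace 𝕜 G] [CompleteSpace G]
  {K : E →L[𝕜] G} {Kd : G →L[𝕜] E} {f : G}

theorem adjoint_apply_adjoint_apply_of_mem_range (h1 : K ∘L Kd ∘L K = K)
    (h3 : adjoint (K ∘L Kd) = K ∘L Kd) (hf : f ∈ LinearMap.range (K : E →ₗ[𝕜] G)) :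
    adjoint Kd (adjoint K f) = f := by
  obtain ⟨h, rfl⟩ := hf
  calc adjoint Kd (adjoint K (K h)) = adjoint (K ∘L Kd) (K h) := by
        rw [ContinuousLinearMap.adjoint_comp]; rfl
    _ = K (Kd (K h)) := by rw [h3]; rfl
    _ = K h := DFunLike.congr_fun h1 h

theorem norm_le_norm_mul_norm_adjoint_apply_of_mem_range (h1 : K ∘L Kd ∘L K = K)
    (h3 : adjoint (K ∘L Kd) = K ∘L Kd) (hf : f ∈ LinearMap.range (K : E →ₗ[𝕜] G)) :
    ‖f‖ ≤ ‖Kd‖ * ‖adjoint K f‖ :=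
  calc ‖f‖ = ‖adjoint Kd (adjoint K f)‖ := by rw [adjoint_apply_adjoint_apply_of_mem_range h1 h3 hf]
    _ ≤ ‖adjoint Kd‖ * ‖adjoint K f‖ := (adjoint Kd).le_opNorm _
    _ = ‖Kd‖ * ‖adjoint K f‖ := by rw [LinearIsometryEquiv.norm_map]

theorem norm_le_of_lower_kframe_bound {ι : Type*} {F : ι → G} {x : G} {A : ℝ} (hA : 0 < A)
    (h1 : K ∘L Kd ∘L K = K) (h3 : adjoint (K ∘L Kd) = K ∘L Kd)
    (hf : f ∈ LinearMap.range (K : E →ₗ[𝕜] G)) (hx : HasSum (fun i => ⟪F i, f⟫_𝕜 • F i) x)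
    (hlower : A * ‖adjoint K f‖ ^ 2 ≤ ∑' i, ‖⟪F i, f⟫_𝕜‖ ^ 2) :
    ‖f‖ ≤ A⁻¹ * ‖Kd‖ ^ 2 * ‖x‖ := by
  have hsq : A * ‖f‖ * ‖f‖ ≤ ‖Kd‖ ^ 2 * ‖x‖ * ‖f‖ :=
    calc A * ‖f‖ * ‖f‖ ≤ A * (‖Kd‖ * ‖adjoint K f‖) ^ 2 := by
          rw [mul_assoc, ← sq]
          gcongr
          exact norm_le_norm_mul_norm_adjoint_apply_of_mem_range h1 h3 hf
      _ = ‖Kd‖ ^ 2 * (A * ‖adjoint K f‖ ^ 2) := by ring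
      _ ≤ ‖Kd‖ ^ 2 * RCLike.re ⟪f, x⟫_𝕜 := by
          rw [← (hasSum_norm_inner_sq_of_hasSum_frame hx).tsum_eq]
          gcongr
      _ ≤ ‖Kd‖ ^ 2 * ‖x‖ * ‖f‖ := by
          rw [mul_assoc, mul_comm ‖x‖]
          gcongr
          exact re_inner_le_norm f x
  rw [mul_assoc, le_inv_mul_iff₀ hA]
  rcases (norm_nonneg f).eq_or_lt with hzero | hpos
  · rw [← hzero, mul_zero]; positivity
  · exact le_of_mul_le_mul_right hsq hpos

end PseudoInverse

theorem ContinuousLinearMap.injOn_of_norm_le_mul_norm {𝕜 E G : Type*} [NormedField 𝕜]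
    [NormedAddCommGroup E] [SeminormedAddCommGroup G] [NormedSpace 𝕜 E] [NormedSpace 𝕜 G]
    (T : E →L[𝕜] G) {p : Submodule 𝕜 E} {C : ℝ} (h : ∀ f ∈ p, ‖f‖ ≤ C * ‖T f‖) :
    Set.InjOn T p := by
  intro f hf g hg hfg
  have := h (f - g) (p.sub_mem hf hg)
  rw [map_sub, hfg, sub_self, norm_zero, mul_zero] at this
  exact sub_eq_zero.mp (norm_le_zero_iff.mp this)

theorem kframe_frame_operator_inverse_bounds_general {ι : Type*}
    (K Kd S : H →L[ℂ] H) (F : ι → H) (A B : ℝ) (hA : 0 < A) (hB : 0 < B)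
    (hframe : ∀ f : H, A * ‖adjoint K f‖ ^ 2 ≤ ∑' i, ‖⟪ F i, f ⟫_ℂ‖ ^ 2 ∧
      ∑' i, ‖⟪ F i, f ⟫_ℂ‖ ^ 2 ≤ B * ‖f‖ ^ 2)
    (h1 : K ∘L Kd ∘L K = K)
    (h3 : adjoint (K ∘L Kd) = K ∘L Kd)
    (hS : ∀ f : H, HasSum (fun i => ⟪ F i, f ⟫_ℂ • F i) (S f)) :
    Set.InjOn S (LinearMap.range (K : H →ₗ[ℂ] H) : Set H) ∧
      ∀ f ∈ LinearMap.range (K : H →ₗ[ℂ] H), B⁻¹ * ‖S f‖ ≤ ‖f‖ ∧ ‖f‖ ≤ A⁻¹ * ‖Kd‖ ^ 2 * ‖S f‖ := by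
  have hupper : ∀ f, ‖S f‖ ≤ B * ‖f‖ :=
    norm_le_mul_norm_of_bessel hB.le hS fun f => (hframe f).2
  have hlower : ∀ f ∈ LinearMap.range (K : H →ₗ[ℂ] H), ‖f‖ ≤ A⁻¹ * ‖Kd‖ ^ 2 * ‖S f‖ :=
    fun f hf => norm_le_of_lower_kframe_bound hA h1 h3 hf (hS f) (hframe f).1
  refine ⟨S.injOn_of_norm_le_mul_norm hlower, fun f hf => ⟨?_, hlower f hf⟩⟩
  rw [inv_mul_le_iff₀ hB]
  exact hupper f

theorem kframe_frame_operator_inverse_bounds {ι : Type*} [Countable ι]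
    (K Kd S : H →L[ℂ] H) (F : ι → H) (A B : ℝ) (hA : 0 < A) (hB : 0 < B)
    (hframe : ∀ f : H, A * ‖adjoint K f‖ ^ 2 ≤ ∑' i, ‖⟪ F i, f ⟫_ℂ‖ ^ 2 ∧
      ∑' i, ‖⟪ F i, f ⟫_ℂ‖ ^ 2 ≤ B * ‖f‖ ^ 2)
    (hKclosed : IsClosed (LinearMap.range (K : H →ₗ[ℂ] H) : Set H))
    (h1 : K ∘L Kd ∘L K = K) (h2 : Kd ∘L K ∘L Kd = Kd)
    (h3 : adjoint (K ∘L Kd) = K ∘L Kd) (h4 : adjoint (Kd ∘L K) = Kd ∘L K)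
    (hS : ∀ f : H, HasSum (fun i => ⟪ F i, f ⟫_ℂ • F i) (S f)) :
    Set.InjOn S (LinearMap.range (K : H →ₗ[ℂ] H) : Set H) ∧
      ∀ f ∈ LinearMap.range (K : H →ₗ[ℂ] H), B⁻¹ * ‖S f‖ ≤ ‖f‖ ∧ ‖f‖ ≤ A⁻¹ * ‖Kd‖ ^ 2 * ‖S f‖ :=
  kframe_frame_operator_inverse_bounds_general K Kd S F A B hA hB hframe h1 h3 hS
end

section
/- Let {W_i}_{i∈I} be closed subspaces of H with weights ω_i > 0, and for each i let {f_{ij}}_{j∈J_i} be a frame for W_i with bounds A_i, B_i satisfying 0 < inf_i A_i ≤ sup_i B_i < ∞. Then {ω_i f_{ij}}_{i∈I, j∈J_i} is a K-frame for H if and only if {(W_i, ω_i)}_{i∈I} is a K-fusion frame for H. -/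
/-! Each `F i j` lies in `W i`, so `⟪F i j, g⟫ = ⟪F i j, π_{W i} g⟫`; the local frame inequalities at
`π_{W i} g` therefore trap the `i`-th block of the K-frame sum between `A₀ ω_i² ‖π_{W i} g‖²` and
`B₀ ω_i² ‖π_{W i} g‖²`. Summing over `i`, the K-frame sum and the fusion-frame sum are comparable up
to the constants `A₀`, `B₀`, so frame bounds for one give frame bounds for the other. -/

open scoped InnerProductSpace
open ContinuousLinearMap (adjoint)

open Set

theorem exists_bounds_iff_of_mem_Icc {X : Type*} {u v S T : X → ℝ} {a b : ℝ}
    (ha : 0 < a) (hb : 0 < b) (h : ∀ x, T x ∈ Icc (a * S x) (b * S x)) :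
    (∃ C D : ℝ, 0 < C ∧ 0 < D ∧ ∀ x, C * u x ≤ T x ∧ T x ≤ D * v x) ↔
      (∃ C D : ℝ, 0 < C ∧ 0 < D ∧ ∀ x, C * u x ≤ S x ∧ S x ≤ D * v x) := by
  constructor
  · rintro ⟨C, D, hC, hD, hT⟩
    refine ⟨C / b, D / a, by positivity, by positivity, fun x => ⟨?_, ?_⟩⟩
    · rw [div_mul_eq_mul_div, div_le_iff₀ hb]
      linarith [(hT x).1, (h x).2]
    · rw [div_mul_eq_mul_div, le_div_iff₀ ha]
      linarith [(hT x).2, (h x).1]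
  · rintro ⟨C, D, hC, hD, hS⟩
    refine ⟨a * C, b * D, by positivity, by positivity, fun x => ⟨?_, ?_⟩⟩
    · nlinarith [(hS x).1, (h x).1]
    · nlinarith [(hS x).2, (h x).2]

theorem tsum_sigma_mem_Icc_of_forall_tsum_mem_Icc {ι : Type*} {J : ι → Type*}
    {a : (Σ i, J i) → ℝ} {s : ι → ℝ} {c d : ℝ} (hc : 0 < c)
    (ha : ∀ p, 0 ≤ a p) (hs : ∀ i, 0 ≤ s i) (hfib : ∀ i, Summable fun j => a ⟨i, j⟩)
    (hbounds : ∀ i, ∑' j, a ⟨i, j⟩ ∈ Icc (c * s i) (d * s i)) :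
    ∑' p, a p ∈ Icc (c * ∑' i, s i) (d * ∑' i, s i) := by
  have hsum_iff : Summable a ↔ Summable fun i => ∑' j, a ⟨i, j⟩ := by
    rw [summable_sigma_of_nonneg ha]
    exact and_iff_right hfib
  by_cases hS : Summable s
  · have hfibsum : Summable fun i => ∑' j, a ⟨i, j⟩ :=
      (hS.mul_left d).of_nonneg_of_le (fun i => tsum_nonneg fun j => ha _) fun i => (hbounds i).2
    rw [(hsum_iff.2 hfibsum).tsum_sigma' hfib, ← tsum_mul_left, ← tsum_mul_left]
    exact ⟨(hS.mul_left c).tsum_le_tsum (fun i => (hbounds i).1) hfibsum,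
      hfibsum.tsum_le_tsum (fun i => (hbounds i).2) (hS.mul_left d)⟩
  · have ha_not : ¬ Summable a := fun hA => hS <|
      ((hsum_iff.1 hA).div_const c).of_nonneg_of_le hs fun i => by
        rw [le_div_iff₀ hc, mul_comm]
        exact (hbounds i).1
    simp [tsum_eq_zero_of_not_summable ha_not, tsum_eq_zero_of_not_summable hS]

section Frames

variable {H : Type*} [NormedAddCommGroup H] [InnerProductSpace ℂ H]

theorem proj_eq_starProjection (U : Submodule ℂ H) [U.HasOrthogonalProjection] :
    proj U = U.starProjection :=
  rfl

theorem inner_proj_right_of_mem {U : Submodule ℂ H} [U.HasOrthogonalProjection] {f : H}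
    (hf : f ∈ U) (g : H) : ⟪f, proj U g⟫_ℂ = ⟪f, g⟫_ℂ := by
  rw [proj_eq_starProjection, ← Submodule.inner_starProjection_left_eq_right,
    Submodule.starProjection_eq_self_iff.2 hf]

theorem summable_of_lower_frame_bound {J : Type*} {f : J → H} {A : ℝ} (hA : 0 < A) {g : H}
    (hlow : A * ‖g‖ ^ 2 ≤ ∑' j, ‖⟪f j, g⟫_ℂ‖ ^ 2) : Summable fun j => ‖⟪f j, g⟫_ℂ‖ ^ 2 := by
  rcases eq_or_ne g 0 with rfl | hg
  · simp
  · by_contra hnot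
    rw [tsum_eq_zero_of_not_summable hnot] at hlow
    have : 0 < A * ‖g‖ ^ 2 := by positivity
    linarith

theorem norm_inner_real_smul_left_sq (r : ℝ) (f g : H) :
    ‖⟪r • f, g⟫_ℂ‖ ^ 2 = r ^ 2 * ‖⟪f, g⟫_ℂ‖ ^ 2 := by
  rw [RCLike.real_smul_eq_coe_smul (K := ℂ), inner_smul_left, norm_mul, RCLike.norm_conj,
    RCLike.norm_ofReal, mul_pow, sq_abs]

theorem summable_and_tsum_norm_inner_smul_sq_mem_Icc {J : Type*} {U : Submodule ℂ H}
    [U.HasOrthogonalProjection] {f : J → H} {A B : ℝ} (hA : 0 < A) (hmem : ∀ j, f j ∈ U)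
    (hframe : ∀ g ∈ U, A * ‖g‖ ^ 2 ≤ ∑' j, ‖⟪f j, g⟫_ℂ‖ ^ 2 ∧
      ∑' j, ‖⟪f j, g⟫_ℂ‖ ^ 2 ≤ B * ‖g‖ ^ 2) (r : ℝ) (g : H) :
    (Summable fun j => ‖⟪r • f j, g⟫_ℂ‖ ^ 2) ∧
      ∑' j, ‖⟪r • f j, g⟫_ℂ‖ ^ 2 ∈ Icc (A * (r ^ 2 * ‖proj U g‖ ^ 2))
        (B * (r ^ 2 * ‖proj U g‖ ^ 2)) := by
  obtain ⟨hlow, hup⟩ := hframe (proj U g) (proj_eq_starProjection U ▸ U.starProjection_apply_mem g)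
  have hsum := summable_of_lower_frame_bound hA hlow
  simp only [inner_proj_right_of_mem (hmem _)] at hlow hup hsum
  simp only [norm_inner_real_smul_left_sq, tsum_mul_left]
  refine ⟨hsum.mul_left _, ?_, ?_⟩
  · rw [mul_left_comm]
    exact mul_le_mul_of_nonneg_left hlow (sq_nonneg r)
  · rw [mul_left_comm]
    exact mul_le_mul_of_nonneg_left hup (sq_nonneg r)

end Frames

variable {H : Type*} [NormedAddCommGroup H] [InnerProductSpace ℂ H] [CompleteSpace H]
  [TopologicalSpace.SeparableSpace H]

theorem local_frames_K_frame_iff_K_fusion_frame_general {ι : Type*}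
    {J : ι → Type*}
    (K : H →L[ℂ] H) (W : ι → Submodule ℂ H) [∀ i, CompleteSpace (W i)]
    (ω : ι → ℝ)
    (F : ∀ i, J i → H) (hmem : ∀ i j, F i j ∈ W i)
    (A B : ι → ℝ) (A₀ B₀ : ℝ) (hA₀ : 0 < A₀) (hAB : A₀ ≤ B₀)
    (hA : ∀ i, A₀ ≤ A i) (hB : ∀ i, B i ≤ B₀)
    (hlocal : ∀ i, ∀ g ∈ W i,
      A i * ‖g‖ ^ 2 ≤ ∑' j, ‖⟪ F i j, g ⟫_ℂ‖ ^ 2 ∧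
      ∑' j, ‖⟪ F i j, g ⟫_ℂ‖ ^ 2 ≤ B i * ‖g‖ ^ 2) :
    (∃ C D : ℝ, 0 < C ∧ 0 < D ∧ ∀ g : H,
        C * ‖adjoint K g‖ ^ 2 ≤ ∑' p : (Σ i, J i), ‖⟪ ω p.1 • F p.1 p.2, g ⟫_ℂ‖ ^ 2 ∧
        ∑' p : (Σ i, J i), ‖⟪ ω p.1 • F p.1 p.2, g ⟫_ℂ‖ ^ 2 ≤ D * ‖g‖ ^ 2) ↔
      (∃ C D : ℝ, 0 < C ∧ 0 < D ∧ ∀ g : H,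
        C * ‖adjoint K g‖ ^ 2 ≤ ∑' i, ω i ^ 2 * ‖proj (W i) g‖ ^ 2 ∧
        ∑' i, ω i ^ 2 * ‖proj (W i) g‖ ^ 2 ≤ D * ‖g‖ ^ 2) := by
  have hframe : ∀ i, ∀ g ∈ W i, A₀ * ‖g‖ ^ 2 ≤ ∑' j, ‖⟪F i j, g⟫_ℂ‖ ^ 2 ∧
      ∑' j, ‖⟪F i j, g⟫_ℂ‖ ^ 2 ≤ B₀ * ‖g‖ ^ 2 := fun i g hg =>
    ⟨(mul_le_mul_of_nonneg_right (hA i) (sq_nonneg _)).trans (hlocal i g hg).1,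
      (hlocal i g hg).2.trans (mul_le_mul_of_nonneg_right (hB i) (sq_nonneg _))⟩
  refine exists_bounds_iff_of_mem_Icc hA₀ (hA₀.trans_le hAB) fun g => ?_
  have hfiber i := summable_and_tsum_norm_inner_smul_sq_mem_Icc hA₀ (hmem i) (hframe i) (ω i) g
  exact tsum_sigma_mem_Icc_of_forall_tsum_mem_Icc hA₀ (fun _ => sq_nonneg _)
    (fun _ => by positivity) (fun i => (hfiber i).1) fun i => (hfiber i).2

theorem local_frames_K_frame_iff_K_fusion_frame {ι : Type*} [Countable ι]
    {J : ι → Type*} [∀ i, Countable (J i)]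
    (K : H →L[ℂ] H) (W : ι → Submodule ℂ H) [∀ i, CompleteSpace (W i)]
    (ω : ι → ℝ) (hω : ∀ i, 0 < ω i)
    (F : ∀ i, J i → H) (hmem : ∀ i j, F i j ∈ W i)
    (A B : ι → ℝ) (A₀ B₀ : ℝ) (hA₀ : 0 < A₀) (hAB : A₀ ≤ B₀)
    (hA : ∀ i, A₀ ≤ A i) (hB : ∀ i, B i ≤ B₀)
    (hlocal : ∀ i, ∀ g ∈ W i,
      A i * ‖g‖ ^ 2 ≤ ∑' j, ‖⟪ F i j, g ⟫_ℂ‖ ^ 2 ∧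
      ∑' j, ‖⟪ F i j, g ⟫_ℂ‖ ^ 2 ≤ B i * ‖g‖ ^ 2) :
    (∃ C D : ℝ, 0 < C ∧ 0 < D ∧ ∀ g : H,
        C * ‖adjoint K g‖ ^ 2 ≤ ∑' p : (Σ i, J i), ‖⟪ ω p.1 • F p.1 p.2, g ⟫_ℂ‖ ^ 2 ∧
        ∑' p : (Σ i, J i), ‖⟪ ω p.1 • F p.1 p.2, g ⟫_ℂ‖ ^ 2 ≤ D * ‖g‖ ^ 2) ↔
      (∃ C D : ℝ, 0 < C ∧ 0 < D ∧ ∀ g : H,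
        C * ‖adjoint K g‖ ^ 2 ≤ ∑' i, ω i ^ 2 * ‖proj (W i) g‖ ^ 2 ∧
        ∑' i, ω i ^ 2 * ‖proj (W i) g‖ ^ 2 ≤ D * ‖g‖ ^ 2) :=
  local_frames_K_frame_iff_K_fusion_frame_general K W ω F hmem A B A₀ B₀ hA₀ hAB hA hB hlocal
end

section
/- Let W = {(W_i, ω_i)}_{i∈I} be a K-fusion frame for H, where K ∈ B(H) has closed range. Then every f ∈ H satisfies the reconstruction formula Kf = Σ_{i∈I} ω_i² π_{R(K)} π_{W_i} (S_W^{-1})* K f, where S_W^{-1} is the inverse of the frame operator S_W restricted to R(K) → S_W(R(K)). -/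
open scoped InnerProductSpace
open ContinuousLinearMap (adjoint)

variable {H : Type*} [NormedAddCommGroup H] [InnerProductSpace ℂ H] [CompleteSpace H]
  [TopologicalSpace.SeparableSpace H]

/-! The frame operator `S` is self-adjoint, being a strongly convergent sum of the self-adjoint
operators `ω i ^ 2 • π_{W i}`. With `π` the projection onto `R(K)` and `R = S_W⁻¹`, for every `v`
we get `⟪v, π S R* K f⟫ = ⟪R S π v, K f⟫ = ⟪π v, K f⟫ = ⟪v, K f⟫`, so `π S R* K f = K f`;
applying `π` termwise to the series for `S (R* K f)` gives the reconstruction formula. -/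

section

variable {𝕜 E ι : Type*} [RCLike 𝕜] [NormedAddCommGroup E] [InnerProductSpace 𝕜 E]
  [CompleteSpace E]

theorem isSelfAdjoint_of_hasSum_apply {T : ι → E →L[𝕜] E} {S : E →L[𝕜] E}
    (hT : ∀ i, IsSelfAdjoint (T i)) (hS : ∀ x, HasSum (fun i => T i x) (S x)) :
    IsSelfAdjoint S := by
  refine LinearMap.IsSymmetric.isSelfAdjoint fun x y => ?_
  have hxy : HasSum (fun i => ⟪x, T i y⟫_𝕜) ⟪x, S y⟫_𝕜 := (innerSL 𝕜 x).hasSum (hS y)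
  have hyx : HasSum (fun i => ⟪T i x, y⟫_𝕜) ⟪S x, y⟫_𝕜 := by
    simpa only [innerSL_apply_apply, RCLike.star_def, inner_conj_symm]
      using ((innerSL 𝕜 y).hasSum (hS x)).star
  have hsym (i : ι) : ⟪T i x, y⟫_𝕜 = ⟪x, T i y⟫_𝕜 := (hT i).isSymmetric x y
  simp only [hsym] at hyx
  exact hyx.unique hxy

theorem Submodule.starProjection_apply_adjoint_apply_of_leftInvOn {U : Submodule 𝕜 E}
    [U.HasOrthogonalProjection] {S R : E →L[𝕜] E} (hS : IsSelfAdjoint S)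
    (hR : Set.LeftInvOn R S U) {y : E} (hy : y ∈ U) :
    U.starProjection (S (adjoint R y)) = y := by
  refine ext_inner_left 𝕜 fun v => ?_
  calc ⟪v, U.starProjection (S (adjoint R y))⟫_𝕜
      = ⟪S (U.starProjection v), adjoint R y⟫_𝕜 := by
        rw [← U.inner_starProjection_left_eq_right]
        exact (hS.isSymmetric _ _).symm
    _ = ⟪U.starProjection v, y⟫_𝕜 := by
        rw [ContinuousLinearMap.adjoint_inner_right, hR (U.starProjection_apply_mem v)]
    _ = ⟪v, y⟫_𝕜 := by
        rw [U.inner_starProjection_left_eq_right, U.starProjection_eq_self_iff.2 hy]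

end

theorem K_fusion_reconstruction_general {ι : Type*}
    (K S SWinv : H →L[ℂ] H) [CompleteSpace (LinearMap.range (K : H →ₗ[ℂ] H))]
    (W : ι → Submodule ℂ H) [∀ i, CompleteSpace (W i)]
    (ω : ι → ℝ)
    (hS : ∀ f : H, HasSum (fun i => ω i ^ 2 • proj (W i) f) (S f))
    (hinv1 : ∀ x ∈ LinearMap.range (K : H →ₗ[ℂ] H), SWinv (S x) = x) :
    ∀ f : H, HasSum (fun i => ω i ^ 2 •
      proj (LinearMap.range (K : H →ₗ[ℂ] H)) (proj (W i) (adjoint SWinv (K f)))) (K f) := by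
  intro f
  set U := LinearMap.range (K : H →ₗ[ℂ] H)
  have hSsa : IsSelfAdjoint S :=
    isSelfAdjoint_of_hasSum_apply (T := fun i => ω i ^ 2 • proj (W i))
      (fun i => .smul (.all _) (isSelfAdjoint_starProjection (W i))) hS
  have hrecon : proj U (S (adjoint SWinv (K f))) = K f :=
    U.starProjection_apply_adjoint_apply_of_leftInvOn hSsa hinv1 (LinearMap.mem_range_self _ f)
  simpa only [hrecon, ContinuousLinearMap.map_smul_of_tower]
    using (proj U).hasSum (hS (adjoint SWinv (K f)))

theorem K_fusion_reconstruction {ι : Type*} [Countable ι]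
    (K S SWinv : H →L[ℂ] H) [CompleteSpace (LinearMap.range (K : H →ₗ[ℂ] H))]
    (W : ι → Submodule ℂ H) [∀ i, CompleteSpace (W i)]
    (ω : ι → ℝ) (hω : ∀ i, 0 < ω i) (A B : ℝ) (hA : 0 < A) (hB : 0 < B)
    (hfusion : ∀ f : H, A * ‖adjoint K f‖ ^ 2 ≤ ∑' i, ω i ^ 2 * ‖proj (W i) f‖ ^ 2 ∧
      ∑' i, ω i ^ 2 * ‖proj (W i) f‖ ^ 2 ≤ B * ‖f‖ ^ 2)
    (hS : ∀ f : H, HasSum (fun i => ω i ^ 2 • proj (W i) f) (S f))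
    (hinv1 : ∀ x ∈ LinearMap.range (K : H →ₗ[ℂ] H), SWinv (S x) = x) :
    ∀ f : H, HasSum (fun i => ω i ^ 2 •
      proj (LinearMap.range (K : H →ₗ[ℂ] H)) (proj (W i) (adjoint SWinv (K f)))) (K f) :=
  K_fusion_reconstruction_general K S SWinv W ω hS hinv1
end
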